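/- In the partial crossed product A #_{(α,ω)} H, for all a,b ∈ A and h,k ∈ H one has (a # h)(b # k) = Σ a(h₍₁₎·b)ω(h₍₂₎,k₍₁₎) # h₍₃₎k₍₂₎. -/

import Mathlib

open TensorProduct

noncomputable section

/-- A twisted partial action `(α, ω)` of a Hopf algebra `H` on a unital
algebra `A` (Definition 2.1 of Alves–Batista–Dokuchaev–Paques).  Sweedler sums
are expressed by quantifying over arbitrary finite representations of the
comultiplication. -/
structure TwistedPartialAction (k H A : Type) [CommRing k]
    [Ring H] [HopfAlgebra k H] [Ring A] [Algebra k A] where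
  act : H →ₗ[k] A →ₗ[k] A
  cocycle : H →ₗ[k] H →ₗ[k] A
  /-- `1_H · a = a` -/
  act_one : ∀ a : A, act 1 a = a
  /-- `h · (ab) = Σ (h₁ · a)(h₂ · b)` -/
  act_mul : ∀ (h : H) (a b : A) (ι : Type) (s : Finset ι) (h1 h2 : ι → H),
    Coalgebra.comul (R := k) h = ∑ i ∈ s, h1 i ⊗ₜ[k] h2 i →
    act h (a * b) = ∑ i ∈ s, act (h1 i) a * act (h2 i) b
  /-- `Σ (h₁ · (l₁ · a)) ω(h₂, l₂) = Σ ω(h₁, l₁)(h₂ l₂ · a)` -/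
  twisted : ∀ (h l : H) (a : A) (ι κ : Type) (s : Finset ι) (t : Finset κ)
    (h1 h2 : ι → H) (l1 l2 : κ → H),
    Coalgebra.comul (R := k) h = ∑ i ∈ s, h1 i ⊗ₜ[k] h2 i →
    Coalgebra.comul (R := k) l = ∑ j ∈ t, l1 j ⊗ₜ[k] l2 j →
    ∑ i ∈ s, ∑ j ∈ t, act (h1 i) (act (l1 j) a) * cocycle (h2 i) (l2 j) =
      ∑ i ∈ s, ∑ j ∈ t, cocycle (h1 i) (l1 j) * act (h2 i * l2 j) a
  /-- `ω(h,l) = Σ ω(h₁, l₁)(h₂ l₂ · 1)` -/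
  cocycle_absorb : ∀ (h l : H) (ι κ : Type) (s : Finset ι) (t : Finset κ)
    (h1 h2 : ι → H) (l1 l2 : κ → H),
    Coalgebra.comul (R := k) h = ∑ i ∈ s, h1 i ⊗ₜ[k] h2 i →
    Coalgebra.comul (R := k) l = ∑ j ∈ t, l1 j ⊗ₜ[k] l2 j →
    cocycle h l = ∑ i ∈ s, ∑ j ∈ t, cocycle (h1 i) (l1 j) * act (h2 i * l2 j) 1

/-- The element `a # h = Σ a(h₁ · 1_A) ⊗ h₂` of `A ⊗ H`. -/
def sharp {k H A : Type} [CommRing k] [Ring H] [HopfAlgebra k H]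
    [Ring A] [Algebra k A] (act : H →ₗ[k] A →ₗ[k] A) (a : A) (h : H) :
    A ⊗[k] H :=
  (TensorProduct.map ((LinearMap.mulLeft k a) ∘ₗ (LinearMap.flip act) 1)
    LinearMap.id) (Coalgebra.comul (R := k) h)

/-- The partial crossed product `A #_{(α,ω)} H`, as a submodule of `A ⊗ H`:
the span of the elements `a # h`. -/
def crossedSpan {k H A : Type} [CommRing k] [Ring H] [HopfAlgebra k H]
    [Ring A] [Algebra k A] (act : H →ₗ[k] A →ₗ[k] A) :
    Submodule k (A ⊗[k] H) :=
  Submodule.span k {x : A ⊗[k] H | ∃ a h, sharp act a h = x}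

/-- `μ` is the multiplication `(a ⊗ h)(b ⊗ l) = Σ a(h₁·b)ω(h₂,l₁) ⊗ h₃l₂`
on `A ⊗ H`. -/
def IsCrossedMul {k H A : Type} [CommRing k] [Ring H] [HopfAlgebra k H]
    [Ring A] [Algebra k A] (act : H →ₗ[k] A →ₗ[k] A)
    (cocycle : H →ₗ[k] H →ₗ[k] A)
    (μ : A ⊗[k] H →ₗ[k] A ⊗[k] H →ₗ[k] A ⊗[k] H) : Prop :=
  ∀ (a b : A) (h l : H) (ι ι' κ : Type) (s : Finset ι) (s' : ι → Finset ι')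
    (t : Finset κ) (h1 h2 : ι → H) (h21 h22 : ι → ι' → H) (l1 l2 : κ → H),
    Coalgebra.comul (R := k) h = ∑ i ∈ s, h1 i ⊗ₜ[k] h2 i →
    (∀ i ∈ s, Coalgebra.comul (R := k) (h2 i) =
      ∑ j ∈ s' i, h21 i j ⊗ₜ[k] h22 i j) →
    Coalgebra.comul (R := k) l = ∑ p ∈ t, l1 p ⊗ₜ[k] l2 p →
    μ (a ⊗ₜ[k] h) (b ⊗ₜ[k] l) =
      ∑ i ∈ s, ∑ j ∈ s' i, ∑ p ∈ t,
        (a * act (h1 i) b * cocycle (h21 i j) (l1 p)) ⊗ₜ[k] (h22 i j * l2 p)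

/-!
Both sides are computed in the convolution algebras of linear maps `H → A ⊗ H` and
`H ⊗ H → A ⊗ H`, where regrouping Sweedler indices is associativity of the convolution
product. The axiom `h · (ab) = Σ (h₁ · a)(h₂ · b)` says that `c ↦ (h ↦ (h · c) ⊗ 1)` is
multiplicative, which lets `a # h` be replaced by `a ⊗ h` as a left factor. On the right
factor `b # l` the same axiom splits off `h₂ · (l₁ · 1)`, and the twisted-module axiom,
read as the convolution identity `(w ⊗ l ↦ w · (l · 1)) * ω = ω * (w ⊗ l ↦ wl · 1)` on
`H ⊗ H`, moves it past the cocycle, turning `Σ ω(h₂, l₁) ⊗ h₃l₂` into `Σ ω(h₂, l₁) # h₃l₂`.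
-/

open Coalgebra WithConv

section ConvolutionOnTensorProduct

variable {k C D T ι κ : Type*} [CommSemiring k] [AddCommMonoid C] [Module k C] [Coalgebra k C]
  [AddCommMonoid D] [Module k D] [Coalgebra k D] [Semiring T] [Algebra k T]

theorem Coalgebra.Repr.convMul_tmul_apply {c : C} {d : D} (ℛc : Repr k c ι) (ℛd : Repr k d κ)
    (F G : WithConv (C ⊗[k] D →ₗ[k] T)) :
    (F * G) (c ⊗ₜ d) = ∑ i ∈ ℛc.index, ∑ j ∈ ℛd.index,
      F (ℛc.left i ⊗ₜ ℛd.left j) * G (ℛc.right i ⊗ₜ ℛd.right j) := by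
  simp only [LinearMap.convMul_apply, TensorProduct.comul_tmul, ← ℛc.eq, ← ℛd.eq,
    TensorProduct.tmul_sum, TensorProduct.sum_tmul, map_sum,
    TensorProduct.AlgebraTensorModule.tensorTensorTensorComm_tmul]
  exact Finset.sum_comm

theorem Coalgebra.Repr.convMul_comp_mk_flip {d : D} (ℛd : Repr k d ι)
    (F G : WithConv (C ⊗[k] D →ₗ[k] T)) :
    toConv ((F * G).ofConv ∘ₗ (TensorProduct.mk k C D).flip d) =
      ∑ i ∈ ℛd.index, toConv (F.ofConv ∘ₗ (TensorProduct.mk k C D).flip (ℛd.left i)) *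
        toConv (G.ofConv ∘ₗ (TensorProduct.mk k C D).flip (ℛd.right i)) := by
  ext c
  simp [(ℛ k c).convMul_tmul_apply ℛd, (ℛ k c).convMul_apply,
    Finset.sum_comm (s := ℛd.index)]

end ConvolutionOnTensorProduct

section ConvolutionFactors

variable {k H A : Type*} [CommSemiring k] [Semiring H] [Bialgebra k H] [Semiring A] [Algebra k A]

def actTmulOne (act : H →ₗ[k] A →ₗ[k] A) (c : A) : H →ₗ[k] A ⊗[k] H :=
  (TensorProduct.mk k A H).flip 1 ∘ₗ act.flip c

@[simp] theorem actTmulOne_apply (act : H →ₗ[k] A →ₗ[k] A) (c : A) (h : H) :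
    actTmulOne act c h = act h c ⊗ₜ 1 := rfl

def actActTmulOne (act : H →ₗ[k] A →ₗ[k] A) : H ⊗[k] H →ₗ[k] A ⊗[k] H :=
  (TensorProduct.mk k A H).flip 1 ∘ₗ TensorProduct.lift (act.compl₂ (act.flip 1))

@[simp] theorem actActTmulOne_tmul (act : H →ₗ[k] A →ₗ[k] A) (w l : H) :
    actActTmulOne act (w ⊗ₜ l) = act w (act l 1) ⊗ₜ 1 := rfl

def cocycleTmulOne (cocycle : H →ₗ[k] H →ₗ[k] A) : H ⊗[k] H →ₗ[k] A ⊗[k] H :=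
  (TensorProduct.mk k A H).flip 1 ∘ₗ TensorProduct.lift cocycle

@[simp] theorem cocycleTmulOne_tmul (cocycle : H →ₗ[k] H →ₗ[k] A) (w l : H) :
    cocycleTmulOne cocycle (w ⊗ₜ l) = cocycle w l ⊗ₜ 1 := rfl

/-- `w ⊗ l ↦ Σ ω(w₁, l₁) ⊗ w₂l₂` -/
def cocycleMul (cocycle : H →ₗ[k] H →ₗ[k] A) : H ⊗[k] H →ₗ[k] A ⊗[k] H :=
  (toConv (cocycleTmulOne cocycle) *
    toConv (TensorProduct.mk k A H 1 ∘ₗ LinearMap.mul' k H)).ofConv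

def sharpOne (act : H →ₗ[k] A →ₗ[k] A) : H →ₗ[k] A ⊗[k] H :=
  (toConv (actTmulOne act 1) * toConv (TensorProduct.mk k A H 1)).ofConv

/-- `w ⊗ l ↦ Σ ω(w₁, l₁) # w₂l₂` -/
def cocycleSharp (act : H →ₗ[k] A →ₗ[k] A) (cocycle : H →ₗ[k] H →ₗ[k] A) :
    H ⊗[k] H →ₗ[k] A ⊗[k] H :=
  (toConv (cocycleTmulOne cocycle) * toConv (sharpOne act ∘ₗ LinearMap.mul' k H)).ofConv

theorem sharpOne_comp_mul' (act : H →ₗ[k] A →ₗ[k] A) :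
    toConv (sharpOne act ∘ₗ LinearMap.mul' k H) =
      toConv (actTmulOne act 1 ∘ₗ LinearMap.mul' k H) *
        toConv (TensorProduct.mk k A H 1 ∘ₗ LinearMap.mul' k H) :=
  WithConv.ext (LinearMap.convMul_comp_coalgHom_distrib _ _ (Bialgebra.mulCoalgHom k H))

end ConvolutionFactors

section PartialCrossedProduct

variable {k H A : Type} [CommRing k] [Ring H] [HopfAlgebra k H] [Ring A] [Algebra k A]

theorem Coalgebra.Repr.sharp_eq_sum {ι : Type*} (act : H →ₗ[k] A →ₗ[k] A) (c : A) {h : H}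
    (ℛh : Repr k h ι) :
    sharp act c h = ∑ i ∈ ℛh.index, (c * act (ℛh.left i) 1) ⊗ₜ ℛh.right i := by
  simp [sharp, ← ℛh.eq]

theorem sharp_eq_tmul_one_mul (act : H →ₗ[k] A →ₗ[k] A) (c : A) (h : H) :
    sharp act c h = (c ⊗ₜ 1) * sharpOne act h := by
  simp [sharp, sharpOne, (ℛ k h).convMul_apply, ← (ℛ k h).eq, Finset.mul_sum]

theorem sum_sharp_eq {act : H →ₗ[k] A →ₗ[k] A} {cocycle : H →ₗ[k] H →ₗ[k] A}
    (a b : A) {h l : H} {ι ι' κ : Type} {s : Finset ι} {s' : ι → Finset ι'} {t : Finset κ}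
    {h1 h2 : ι → H} {h21 h22 : ι → ι' → H} {l1 l2 : κ → H}
    (hh : comul (R := k) h = ∑ i ∈ s, h1 i ⊗ₜ[k] h2 i)
    (hh2 : ∀ i ∈ s, comul (R := k) (h2 i) = ∑ j ∈ s' i, h21 i j ⊗ₜ[k] h22 i j)
    (hl : comul (R := k) l = ∑ p ∈ t, l1 p ⊗ₜ[k] l2 p) :
    ∑ i ∈ s, ∑ j ∈ s' i, ∑ p ∈ t,
      sharp act (a * act (h1 i) b * cocycle (h21 i j) (l1 p)) (h22 i j * l2 p) =
    (a ⊗ₜ 1) * (toConv (actTmulOne act b) *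
      toConv (cocycleSharp act cocycle ∘ₗ (TensorProduct.mk k H H).flip l)) h := by
  rw [(Coalgebra.Repr.mk s h1 h2 hh.symm).convMul_apply, cocycleSharp,
    (Coalgebra.Repr.mk t l1 l2 hl.symm).convMul_comp_mk_flip, Finset.mul_sum]
  refine Finset.sum_congr rfl fun i hi => ?_
  simp only [ofConv_sum, LinearMap.coe_sum, Finset.sum_apply,
    (Coalgebra.Repr.mk (s' i) (h21 i) (h22 i) (hh2 i hi).symm).convMul_apply, LinearMap.coe_comp,
    Function.comp_apply, LinearMap.flip_apply, TensorProduct.mk_apply, cocycleTmulOne_tmul,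
    LinearMap.mul'_apply, actTmulOne_apply, sharp_eq_tmul_one_mul, Finset.mul_sum]
  rw [Finset.sum_comm]
  simp only [← mul_assoc, Algebra.TensorProduct.tmul_mul_tmul, mul_one]

theorem IsCrossedMul.tmul_tmul {act : H →ₗ[k] A →ₗ[k] A}
    {cocycle : H →ₗ[k] H →ₗ[k] A} {μ : A ⊗[k] H →ₗ[k] A ⊗[k] H →ₗ[k] A ⊗[k] H}
    (hμ : IsCrossedMul act cocycle μ) (a b : A) (h l : H) :
    μ (a ⊗ₜ h) (b ⊗ₜ l) = (a ⊗ₜ 1) * (toConv (actTmulOne act b) *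
      toConv (cocycleMul cocycle ∘ₗ (TensorProduct.mk k H H).flip l)) h := by
  rw [hμ a b h l _ _ _ _ _ _ _ _ _ _ _ _ (ℛ k h).eq.symm
    (fun i _ => (ℛ k ((ℛ k h).right i)).eq.symm) (ℛ k l).eq.symm]
  simp [(ℛ k h).convMul_apply, cocycleMul, Repr.convMul_tmul_apply (ℛ k _) (ℛ k l),
    Finset.mul_sum, mul_assoc]

namespace TwistedPartialAction

variable (P : TwistedPartialAction k H A)

theorem actTmulOne_mul (b c : A) :
    toConv (actTmulOne P.act (b * c)) =
      toConv (actTmulOne P.act b) * toConv (actTmulOne P.act c) := by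
  ext h
  simp [(ℛ k h).convMul_apply, P.act_mul h b c _ _ _ _ (ℛ k h).eq.symm, TensorProduct.sum_tmul]

theorem actActTmulOne_convMul_cocycleTmulOne :
    toConv (actActTmulOne P.act) * toConv (cocycleTmulOne P.cocycle) =
      toConv (cocycleTmulOne P.cocycle) *
        toConv (actTmulOne P.act 1 ∘ₗ LinearMap.mul' k H) := by
  refine WithConv.ext (TensorProduct.ext' fun w l => ?_)
  have := congrArg (· ⊗ₜ[k] (1 : H))
    (P.twisted w l 1 _ _ _ _ _ _ _ _ (ℛ k w).eq.symm (ℛ k l).eq.symm)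
  simpa [(ℛ k w).convMul_tmul_apply (ℛ k l), TensorProduct.sum_tmul] using this

theorem actActTmulOne_convMul_cocycleMul :
    (toConv (actActTmulOne P.act) * toConv (cocycleMul P.cocycle)).ofConv =
      cocycleSharp P.act P.cocycle := by
  rw [cocycleSharp, cocycleMul, toConv_ofConv, sharpOne_comp_mul', ← mul_assoc,
    actActTmulOne_convMul_cocycleTmulOne, mul_assoc]

end TwistedPartialAction

namespace IsCrossedMul

variable {P : TwistedPartialAction k H A}
  {μ : A ⊗[k] H →ₗ[k] A ⊗[k] H →ₗ[k] A ⊗[k] H} (hμ : IsCrossedMul P.act P.cocycle μ)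
include hμ

theorem sharp_left (a : A) (h : H) : μ (sharp P.act a h) = μ (a ⊗ₜ h) := by
  refine TensorProduct.ext' fun b l => ?_
  calc μ (sharp P.act a h) (b ⊗ₜ l)
      = (a ⊗ₜ 1) * (toConv (actTmulOne P.act 1) * (toConv (actTmulOne P.act b) *
          toConv (cocycleMul P.cocycle ∘ₗ (TensorProduct.mk k H H).flip l))) h := by
        rw [(ℛ k h).sharp_eq_sum, map_sum, LinearMap.sum_apply, (ℛ k h).convMul_apply,
          Finset.mul_sum]
        simp only [hμ.tmul_tmul, actTmulOne_apply, ← mul_assoc,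
          Algebra.TensorProduct.tmul_mul_tmul, one_mul]
    _ = μ (a ⊗ₜ h) (b ⊗ₜ l) := by
        rw [← mul_assoc, ← P.actTmulOne_mul, one_mul, hμ.tmul_tmul]

theorem tmul_sharp (a b : A) (h l : H) :
    μ (a ⊗ₜ h) (sharp P.act b l) = (a ⊗ₜ 1) * (toConv (actTmulOne P.act b) *
      toConv (cocycleSharp P.act P.cocycle ∘ₗ (TensorProduct.mk k H H).flip l)) h := by
  have hact (g : H) : actTmulOne P.act (P.act g 1) =
      actActTmulOne P.act ∘ₗ (TensorProduct.mk k H H).flip g := rfl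
  rw [(ℛ k l).sharp_eq_sum, map_sum, ← P.actActTmulOne_convMul_cocycleMul,
    (ℛ k l).convMul_comp_mk_flip, Finset.mul_sum, ofConv_sum, LinearMap.sum_apply,
    Finset.mul_sum]
  refine Finset.sum_congr rfl fun p _ => ?_
  rw [hμ.tmul_tmul, P.actTmulOne_mul, hact, mul_assoc]

end IsCrossedMul

end PartialCrossedProduct

theorem sharp_mul_sharp
    {k H A : Type} [CommRing k] [Ring H] [HopfAlgebra k H]
    [Ring A] [Algebra k A] (P : TwistedPartialAction k H A)
    (μ : A ⊗[k] H →ₗ[k] A ⊗[k] H →ₗ[k] A ⊗[k] H)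
    (hμ : IsCrossedMul P.act P.cocycle μ) :
    ∀ (a b : A) (h l : H) (ι ι' κ : Type) (s : Finset ι) (s' : ι → Finset ι')
      (t : Finset κ) (h1 h2 : ι → H) (h21 h22 : ι → ι' → H) (l1 l2 : κ → H),
      Coalgebra.comul (R := k) h = ∑ i ∈ s, h1 i ⊗ₜ[k] h2 i →
      (∀ i ∈ s, Coalgebra.comul (R := k) (h2 i) =
        ∑ j ∈ s' i, h21 i j ⊗ₜ[k] h22 i j) →
      Coalgebra.comul (R := k) l = ∑ p ∈ t, l1 p ⊗ₜ[k] l2 p →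
      μ (sharp P.act a h) (sharp P.act b l) =
        ∑ i ∈ s, ∑ j ∈ s' i, ∑ p ∈ t,
          sharp P.act (a * P.act (h1 i) b * P.cocycle (h21 i j) (l1 p))
            (h22 i j * l2 p) := by
  intro a b h l ι ι' κ s s' t h1 h2 h21 h22 l1 l2 hh hh2 hl
  rw [hμ.sharp_left, hμ.tmul_sharp, sum_sharp_eq a b hh hh2 hl]
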